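/- Let γ:(ℝ,0)→ℝ⁴ be a smooth curve with Frenet-type frame {e₁,e₂,e₃,e₄}, curvatures κ₁,κ₄,κ₆ and speed l (γ'=l e₁). For a unit vector field v along γ let D_v={x∈ℝ⁴: ∃t, H_v(t,x)=H_v'(t,x)=0} be the envelope of the hyperplane family H_v(t,x)=⟨v(t),x−γ(t)⟩=0. Then: if κ₁(t)≠0 for all t, the image of S₁(t,s,r)=γ+(l/κ₁)e₂+se₃+re₄ equals D_{e₁}; if (κ₁(t),κ₄(t))≠(0,0) for all t, the image of S₂(t,s,r)=γ+se₄+r(κ₄e₁+κ₁e₃)/√(κ₄²+κ₁²) equals D_{e₂}; if (κ₄(t),κ₆(t))≠(0,0) for all t, the image of S₃(t,s,r)=γ+se₁+r(κ₆e₂+κ₄e₄)/√(κ₆²+κ₄²) equals D_{e₃}; and if κ₆(t)≠0 for all t, the image of S₄(t,s,r)=γ+se₁+re₂ equals D_{e₄}. -/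

import Mathlib

open scoped Topology
open Filter
open Matrix

noncomputable section

/-- Ambient space `ℝ⁴`. -/
abbrev E4 := Fin 4 → ℝ

/-- The standard inner product on `ℝ⁴`. -/
def dot4 (u v : E4) : ℝ := ∑ i, u i * v i

/-- `det(u,v,w,x)` for four vectors of `ℝ⁴`. -/
def det4 (u v w x : E4) : ℝ := Matrix.det (Matrix.of ![u, v, w, x])

/-- The triple exterior (cross) product `u ∧ v ∧ w` in `ℝ⁴`. -/
def tcross (u v w : E4) : E4 := fun i => det4 (Pi.single i 1) u v w

lemma dot4_comm (u v : E4) : dot4 u v = dot4 v u := by simp [dot4, mul_comm]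

lemma dot4_add_right (u v w : E4) : dot4 u (v + w) = dot4 u v + dot4 u w := by
  simp [dot4, mul_add, Finset.sum_add_distrib]

lemma dot4_smul_right (c : ℝ) (u v : E4) : dot4 u (c • v) = c * dot4 u v := by
  simp only [dot4, Pi.smul_apply, smul_eq_mul, Finset.mul_sum]
  exact Finset.sum_congr rfl fun i _ => by ring

lemma dot4_add_left (u v w : E4) : dot4 (u + v) w = dot4 u w + dot4 v w := by
  simp [dot4, add_mul, Finset.sum_add_distrib]

lemma dot4_smul_left (c : ℝ) (u v : E4) : dot4 (c • u) v = c * dot4 u v := by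
  simp only [dot4, Pi.smul_apply, smul_eq_mul, Finset.mul_sum]
  exact Finset.sum_congr rfl fun i _ => by ring

lemma dot4_neg_left (u v : E4) : dot4 (-u) v = -dot4 u v := by
  simp [dot4, Finset.sum_neg_distrib]

lemma dot4_neg_right (u v : E4) : dot4 u (-v) = -dot4 u v := by
  simp [dot4, Finset.sum_neg_distrib]

lemma frame_decomp (e₁ e₂ e₃ e₄ : E4)
    (h11 : dot4 e₁ e₁ = 1) (h22 : dot4 e₂ e₂ = 1) (h33 : dot4 e₃ e₃ = 1)
    (h44 : dot4 e₄ e₄ = 1) (h12 : dot4 e₁ e₂ = 0) (h13 : dot4 e₁ e₃ = 0)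
    (h14 : dot4 e₁ e₄ = 0) (h23 : dot4 e₂ e₃ = 0) (h24 : dot4 e₂ e₄ = 0)
    (h34 : dot4 e₃ e₄ = 0) (u : E4) :
    u = dot4 e₁ u • e₁ + dot4 e₂ u • e₂ + dot4 e₃ u • e₃ + dot4 e₄ u • e₄ := by
  set M : Matrix (Fin 4) (Fin 4) ℝ := Matrix.of ![e₁, e₂, e₃, e₄] with hM
  simp only [dot4, Fin.sum_univ_four] at h11 h22 h33 h44 h12 h13 h14 h23 h24 h34
  have hMMT : M * Mᵀ = 1 := by
    ext i j
    fin_cases i <;> fin_cases j <;>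
      simp [Matrix.mul_apply, Matrix.transpose_apply, hM, Matrix.one_apply,
        Matrix.vecHead, Matrix.vecTail, Fin.sum_univ_four] <;>
      first
        | linear_combination h11 | linear_combination h22 | linear_combination h33
        | linear_combination h44 | linear_combination h12 | linear_combination h13
        | linear_combination h14 | linear_combination h23 | linear_combination h24
        | linear_combination h34
  have hMTM : Mᵀ * M = 1 := mul_eq_one_comm.mp hMMT
  have hu : u = Mᵀ *ᵥ (M *ᵥ u) := by
    rw [Matrix.mulVec_mulVec, hMTM, Matrix.one_mulVec]
  funext i
  have h := congrFun hu i
  simp [Matrix.mulVec, dotProduct, Matrix.transpose_apply, hM,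
    Fin.sum_univ_four] at h
  simp only [dot4, Fin.sum_univ_four, Pi.add_apply, Pi.smul_apply, smul_eq_mul]
  linear_combination h

lemma hasDerivAt_H (v g : ℝ → E4) (t : ℝ) (x : E4)
    (hv : DifferentiableAt ℝ v t) (hg : DifferentiableAt ℝ g t) :
    HasDerivAt (fun τ => dot4 (v τ) (x - g τ))
      (dot4 (deriv v t) (x - g t) - dot4 (v t) (deriv g t)) t := by
  have hvi : ∀ i, HasDerivAt (fun τ => v τ i) (deriv v t i) t :=
    fun i => (hasDerivAt_pi.mp hv.hasDerivAt) i
  have hgi : ∀ i, HasDerivAt (fun τ => g τ i) (deriv g t i) t :=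
    fun i => (hasDerivAt_pi.mp hg.hasDerivAt) i
  have key : ∀ i ∈ Finset.univ, HasDerivAt (fun τ => v τ i * (x i - g τ i))
      (deriv v t i * (x i - g t i) + v t i * (0 - deriv g t i)) t := fun i _ =>
    (hvi i).mul ((hasDerivAt_const t (x i)).sub (hgi i))
  have hs := HasDerivAt.fun_sum key
  simp only [dot4]
  convert hs using 1
  · rfl
  · rfl
  · rfl
  simp [Pi.sub_apply, Finset.sum_add_distrib, Finset.sum_sub_distrib, mul_sub]
  ring

/-- Given a curve `γ` in `ℝ⁴` with a Frenet-type frame `{e₁,e₂,e₃,e₄}`, curvatures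
`κ₁,κ₄,κ₆` and speed `l`, the images of the two-ruled hypersurfaces `S₁,…,S₄` coincide
with the envelopes `D_{e₁},…,D_{e₄}` of the families of hyperplanes orthogonal to
`e₁,…,e₄`, under the respective non-degeneracy conditions. -/
theorem stmt18 (γ e₁ e₂ e₃ e₄ : ℝ → E4) (l κ₁ κ₄ κ₆ : ℝ → ℝ)
    (hγ : ContDiff ℝ (⊤ : ℕ∞) γ) (he₁ : ContDiff ℝ (⊤ : ℕ∞) e₁) (he₂ : ContDiff ℝ (⊤ : ℕ∞) e₂)
    (he₃ : ContDiff ℝ (⊤ : ℕ∞) e₃) (he₄ : ContDiff ℝ (⊤ : ℕ∞) e₄)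
    (hl : ContDiff ℝ (⊤ : ℕ∞) l) (hκ₁ : ContDiff ℝ (⊤ : ℕ∞) κ₁) (hκ₄ : ContDiff ℝ (⊤ : ℕ∞) κ₄)
    (hκ₆ : ContDiff ℝ (⊤ : ℕ∞) κ₆)
    -- orthonormal frame
    (horth : ∀ t,
      dot4 (e₁ t) (e₁ t) = 1 ∧ dot4 (e₂ t) (e₂ t) = 1 ∧
      dot4 (e₃ t) (e₃ t) = 1 ∧ dot4 (e₄ t) (e₄ t) = 1 ∧
      dot4 (e₁ t) (e₂ t) = 0 ∧ dot4 (e₁ t) (e₃ t) = 0 ∧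
      dot4 (e₁ t) (e₄ t) = 0 ∧ dot4 (e₂ t) (e₃ t) = 0 ∧
      dot4 (e₂ t) (e₄ t) = 0 ∧ dot4 (e₃ t) (e₄ t) = 0)
    (he₄def : ∀ t, e₄ t = tcross (e₁ t) (e₂ t) (e₃ t))
    -- Frenet--Serret type formulas
    (hγ' : ∀ t, deriv γ t = l t • e₁ t)
    (he₁' : ∀ t, deriv e₁ t = κ₁ t • e₂ t)
    (he₂' : ∀ t, deriv e₂ t = -(κ₁ t) • e₁ t + κ₄ t • e₃ t)
    (he₃' : ∀ t, deriv e₃ t = -(κ₄ t) • e₂ t + κ₆ t • e₄ t)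
    (he₄' : ∀ t, deriv e₄ t = -(κ₆ t) • e₃ t)
    -- height functions and envelopes
    (H : (ℝ → E4) → ℝ → E4 → ℝ)
    (hH : H = fun v t x => dot4 (v t) (x - γ t))
    (D : (ℝ → E4) → Set E4)
    (hD : D = fun v => {x | ∃ t, H v t x = 0 ∧ deriv (fun τ => H v τ x) t = 0}) :
    ((∀ t, κ₁ t ≠ 0) →
      (Set.range fun p : ℝ × ℝ × ℝ =>
        γ p.1 + (l p.1 / κ₁ p.1) • e₂ p.1 + p.2.1 • e₃ p.1 + p.2.2 • e₄ p.1)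
        = D e₁) ∧
    ((∀ t, (κ₁ t, κ₄ t) ≠ (0, 0)) →
      (Set.range fun p : ℝ × ℝ × ℝ =>
        γ p.1 + p.2.1 • e₄ p.1 + p.2.2 •
          ((Real.sqrt ((κ₄ p.1)^2 + (κ₁ p.1)^2))⁻¹ •
            (κ₄ p.1 • e₁ p.1 + κ₁ p.1 • e₃ p.1)))
        = D e₂) ∧
    ((∀ t, (κ₄ t, κ₆ t) ≠ (0, 0)) →
      (Set.range fun p : ℝ × ℝ × ℝ =>
        γ p.1 + p.2.1 • e₁ p.1 + p.2.2 •
          ((Real.sqrt ((κ₆ p.1)^2 + (κ₄ p.1)^2))⁻¹ •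
            (κ₆ p.1 • e₂ p.1 + κ₄ p.1 • e₄ p.1)))
        = D e₃) ∧
    ((∀ t, κ₆ t ≠ 0) →
      (Set.range fun p : ℝ × ℝ × ℝ =>
        γ p.1 + p.2.1 • e₁ p.1 + p.2.2 • e₂ p.1)
        = D e₄) := by
  subst hH hD
  have hγd : Differentiable ℝ γ := hγ.differentiable (by simp)
  have hder : ∀ (v : ℝ → E4), ContDiff ℝ (⊤ : ℕ∞) v → ∀ (t : ℝ) (x : E4),
      deriv (fun τ => dot4 (v τ) (x - γ τ)) t
        = dot4 (deriv v t) (x - γ t) - dot4 (v t) (l t • e₁ t) := by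
    intro v hv t x
    rw [(hasDerivAt_H v γ t x ((hv.differentiable (by simp)) t) (hγd t)).deriv, hγ' t]
  have memD : ∀ (v : ℝ → E4), ContDiff ℝ (⊤ : ℕ∞) v → ∀ x : E4,
      (x ∈ {x : E4 | ∃ t, dot4 (v t) (x - γ t) = 0 ∧
        deriv (fun τ => dot4 (v τ) (x - γ τ)) t = 0}) ↔
      ∃ t, dot4 (v t) (x - γ t) = 0 ∧
        dot4 (deriv v t) (x - γ t) - dot4 (v t) (l t • e₁ t) = 0 := by
    intro v hv x
    simp only [Set.mem_setOf_eq, hder v hv]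
  refine ⟨?_, ?_, ?_, ?_⟩
  -- Part 1
  · intro hk
    ext x
    rw [memD e₁ he₁ x]
    simp only [Set.mem_range, Prod.exists]
    constructor
    · rintro ⟨t, s, r, rfl⟩
      obtain ⟨h11, h22, h33, h44, h12, h13, h14, h23, h24, h34⟩ := horth t
      have hx : γ t + (l t / κ₁ t) • e₂ t + s • e₃ t + r • e₄ t - γ t
          = (l t / κ₁ t) • e₂ t + s • e₃ t + r • e₄ t := by abel
      refine ⟨t, ?_, ?_⟩
      · rw [hx]
        simp [dot4_add_right, dot4_smul_right, h12, h13, h14]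
      · rw [hx, he₁' t]
        simp [dot4_add_right, dot4_smul_right, dot4_smul_left,
          h22, h23, h24, h11]
        rw [div_mul_cancel₀ _ (hk t), sub_self]
    · rintro ⟨t, h0, h1⟩
      obtain ⟨h11, h22, h33, h44, h12, h13, h14, h23, h24, h34⟩ := horth t
      rw [he₁' t] at h1
      set u := x - γ t with hu
      have hdec := frame_decomp (e₁ t) (e₂ t) (e₃ t) (e₄ t)
        h11 h22 h33 h44 h12 h13 h14 h23 h24 h34 u
      have ha2 : κ₁ t * dot4 (e₂ t) u - l t = 0 := by
        simpa [dot4_smul_left, dot4_smul_right, h11] using h1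
      have hb : dot4 (e₂ t) u = l t / κ₁ t := by
        rw [eq_div_iff (hk t)]
        linear_combination ha2
      refine ⟨t, dot4 (e₃ t) u, dot4 (e₄ t) u, ?_⟩
      have hx : γ t + u = x := by rw [hu]; abel
      have hu2 : u = (l t / κ₁ t) • e₂ t + dot4 (e₃ t) u • e₃ t
          + dot4 (e₄ t) u • e₄ t := by
        conv_lhs => rw [hdec]
        rw [h0, hb, zero_smul, zero_add]
      rw [← hx]
      conv_rhs => rw [hu2]
      abel
  -- Part 2
  · intro hk
    ext x
    rw [memD e₂ he₂ x]
    simp only [Set.mem_range, Prod.exists]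
    have hkk : ∀ t, 0 < κ₄ t ^ 2 + κ₁ t ^ 2 := by
      intro t
      have hne : ¬(κ₁ t = 0 ∧ κ₄ t = 0) := by simpa [Prod.ext_iff] using hk t
      by_contra hc
      push_neg at hc
      have e1 : κ₁ t ^ 2 = 0 := by nlinarith [sq_nonneg (κ₁ t), sq_nonneg (κ₄ t)]
      have e4 : κ₄ t ^ 2 = 0 := by nlinarith [sq_nonneg (κ₁ t), sq_nonneg (κ₄ t)]
      exact hne ⟨sq_eq_zero_iff.mp e1, sq_eq_zero_iff.mp e4⟩
    have hq : ∀ t, Real.sqrt (κ₄ t ^ 2 + κ₁ t ^ 2) ≠ 0 := fun t =>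
      ne_of_gt (Real.sqrt_pos.mpr (hkk t))
    have hq2 : ∀ t, Real.sqrt (κ₄ t ^ 2 + κ₁ t ^ 2) ^ 2 = κ₄ t ^ 2 + κ₁ t ^ 2 :=
      fun t => Real.sq_sqrt (le_of_lt (hkk t))
    constructor
    · rintro ⟨t, s, r, rfl⟩
      obtain ⟨h11, h22, h33, h44, h12, h13, h14, h23, h24, h34⟩ := horth t
      set q := Real.sqrt (κ₄ t ^ 2 + κ₁ t ^ 2) with hqdef
      have hx : γ t + s • e₄ t + r • (q⁻¹ • (κ₄ t • e₁ t + κ₁ t • e₃ t)) - γ t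
          = s • e₄ t + r • (q⁻¹ • (κ₄ t • e₁ t + κ₁ t • e₃ t)) := by abel
      refine ⟨t, ?_, ?_⟩
      · rw [hx]
        simp [dot4_add_right, dot4_smul_right, h24, h23,
          dot4_comm (e₂ t) (e₁ t), dot4_comm (e₂ t) (e₃ t), h12]
      · rw [hx, he₂' t]
        simp [dot4_add_right, dot4_add_left, dot4_smul_right, dot4_smul_left,
          dot4_neg_left, dot4_neg_right, neg_smul,
          h11, h33, h14, h34, h13, h12, dot4_comm (e₃ t) (e₁ t),
          dot4_comm (e₂ t) (e₁ t)]
        ring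
    · rintro ⟨t, h0, h1⟩
      obtain ⟨h11, h22, h33, h44, h12, h13, h14, h23, h24, h34⟩ := horth t
      rw [he₂' t] at h1
      set u := x - γ t with hu
      have hdec := frame_decomp (e₁ t) (e₂ t) (e₃ t) (e₄ t)
        h11 h22 h33 h44 h12 h13 h14 h23 h24 h34 u
      set a₁ := dot4 (e₁ t) u
      set a₃ := dot4 (e₃ t) u
      set a₄ := dot4 (e₄ t) u
      have hlin : κ₄ t * a₃ - κ₁ t * a₁ = 0 := by
        simp only [dot4_add_left, dot4_smul_left, dot4_neg_left, dot4_smul_right,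
          dot4_comm (e₂ t) (e₁ t), neg_smul, h12] at h1
        linear_combination h1
      set q := Real.sqrt (κ₄ t ^ 2 + κ₁ t ^ 2) with hqdef
      have hqne : q ≠ 0 := hq t
      have hqq : q * q = κ₄ t ^ 2 + κ₁ t ^ 2 :=
        Real.mul_self_sqrt (le_of_lt (hkk t))
      refine ⟨t, a₄, (a₁ * κ₄ t + a₃ * κ₁ t) / q, ?_⟩
      have h2 : q ^ 2 = κ₄ t ^ 2 + κ₁ t ^ 2 := hq2 t
      have c₁ : (a₁ * κ₄ t + a₃ * κ₁ t) / q * (q⁻¹ * κ₄ t) = a₁ := by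
        field_simp
        linear_combination κ₁ t * hlin - a₁ * h2
      have c₃ : (a₁ * κ₄ t + a₃ * κ₁ t) / q * (q⁻¹ * κ₁ t) = a₃ := by
        field_simp
        linear_combination (-(κ₄ t)) * hlin - a₃ * h2
      have hx : γ t + u = x := by rw [hu]; abel
      have hexp : ((a₁ * κ₄ t + a₃ * κ₁ t) / q) • (q⁻¹ • (κ₄ t • e₁ t + κ₁ t • e₃ t))
          = a₁ • e₁ t + a₃ • e₃ t := by
        simp only [smul_add, smul_smul]
        rw [c₁, c₃]
      have hu2 : u = a₁ • e₁ t + a₃ • e₃ t + a₄ • e₄ t := by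
        conv_lhs => rw [hdec]
        rw [h0, zero_smul, add_zero]
      rw [hexp, ← hx]
      conv_rhs => rw [hu2]
      abel
  -- Part 3
  · intro hk
    ext x
    rw [memD e₃ he₃ x]
    simp only [Set.mem_range, Prod.exists]
    have hkk : ∀ t, 0 < κ₆ t ^ 2 + κ₄ t ^ 2 := by
      intro t
      have hne : ¬(κ₄ t = 0 ∧ κ₆ t = 0) := by simpa [Prod.ext_iff] using hk t
      by_contra hc
      push_neg at hc
      have e1 : κ₄ t ^ 2 = 0 := by nlinarith [sq_nonneg (κ₄ t), sq_nonneg (κ₆ t)]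
      have e4 : κ₆ t ^ 2 = 0 := by nlinarith [sq_nonneg (κ₄ t), sq_nonneg (κ₆ t)]
      exact hne ⟨sq_eq_zero_iff.mp e1, sq_eq_zero_iff.mp e4⟩
    have hq : ∀ t, Real.sqrt (κ₆ t ^ 2 + κ₄ t ^ 2) ≠ 0 := fun t =>
      ne_of_gt (Real.sqrt_pos.mpr (hkk t))
    have hq2 : ∀ t, Real.sqrt (κ₆ t ^ 2 + κ₄ t ^ 2) ^ 2 = κ₆ t ^ 2 + κ₄ t ^ 2 :=
      fun t => Real.sq_sqrt (le_of_lt (hkk t))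
    constructor
    · rintro ⟨t, s, r, rfl⟩
      obtain ⟨h11, h22, h33, h44, h12, h13, h14, h23, h24, h34⟩ := horth t
      set q := Real.sqrt (κ₆ t ^ 2 + κ₄ t ^ 2) with hqdef
      have hx : γ t + s • e₁ t + r • (q⁻¹ • (κ₆ t • e₂ t + κ₄ t • e₄ t)) - γ t
          = s • e₁ t + r • (q⁻¹ • (κ₆ t • e₂ t + κ₄ t • e₄ t)) := by abel
      refine ⟨t, ?_, ?_⟩
      · rw [hx]
        simp [dot4_add_right, dot4_smul_right, h23, h34,
          dot4_comm (e₃ t) (e₁ t), dot4_comm (e₃ t) (e₂ t), h13]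
      · rw [hx, he₃' t]
        simp [dot4_add_right, dot4_add_left, dot4_smul_right, dot4_smul_left,
          dot4_neg_left, dot4_neg_right, neg_smul,
          h22, h44, h12, h24, h14, h13, dot4_comm (e₂ t) (e₁ t),
          dot4_comm (e₄ t) (e₁ t), dot4_comm (e₄ t) (e₂ t), dot4_comm (e₃ t) (e₁ t)]
        ring
    · rintro ⟨t, h0, h1⟩
      obtain ⟨h11, h22, h33, h44, h12, h13, h14, h23, h24, h34⟩ := horth t
      rw [he₃' t] at h1
      set u := x - γ t with hu
      have hdec := frame_decomp (e₁ t) (e₂ t) (e₃ t) (e₄ t)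
        h11 h22 h33 h44 h12 h13 h14 h23 h24 h34 u
      set a₁ := dot4 (e₁ t) u
      set a₂ := dot4 (e₂ t) u
      set a₄ := dot4 (e₄ t) u
      have hlin : κ₆ t * a₄ - κ₄ t * a₂ = 0 := by
        simp only [dot4_add_left, dot4_smul_left, dot4_neg_left, dot4_smul_right,
          dot4_comm (e₃ t) (e₁ t), neg_smul, h13] at h1
        linear_combination h1
      set q := Real.sqrt (κ₆ t ^ 2 + κ₄ t ^ 2) with hqdef
      have hqne : q ≠ 0 := hq t
      have hqq : q * q = κ₆ t ^ 2 + κ₄ t ^ 2 :=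
        Real.mul_self_sqrt (le_of_lt (hkk t))
      refine ⟨t, a₁, (a₂ * κ₆ t + a₄ * κ₄ t) / q, ?_⟩
      have h2 : q ^ 2 = κ₆ t ^ 2 + κ₄ t ^ 2 := hq2 t
      have c₂ : (a₂ * κ₆ t + a₄ * κ₄ t) / q * (q⁻¹ * κ₆ t) = a₂ := by
        field_simp
        linear_combination κ₄ t * hlin - a₂ * h2
      have c₄ : (a₂ * κ₆ t + a₄ * κ₄ t) / q * (q⁻¹ * κ₄ t) = a₄ := by
        field_simp
        linear_combination (-(κ₆ t)) * hlin - a₄ * h2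
      have hx : γ t + u = x := by rw [hu]; abel
      have hexp : ((a₂ * κ₆ t + a₄ * κ₄ t) / q) • (q⁻¹ • (κ₆ t • e₂ t + κ₄ t • e₄ t))
          = a₂ • e₂ t + a₄ • e₄ t := by
        simp only [smul_add, smul_smul]
        rw [c₂, c₄]
      have hu2 : u = a₁ • e₁ t + a₂ • e₂ t + a₄ • e₄ t := by
        conv_lhs => rw [hdec]
        rw [h0, zero_smul, add_zero]
      rw [hexp, ← hx]
      conv_rhs => rw [hu2]
      abel
  -- Part 4
  · intro hk
    ext x
    rw [memD e₄ he₄ x]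
    simp only [Set.mem_range, Prod.exists]
    constructor
    · rintro ⟨t, s, r, rfl⟩
      obtain ⟨h11, h22, h33, h44, h12, h13, h14, h23, h24, h34⟩ := horth t
      have hx : γ t + s • e₁ t + r • e₂ t - γ t = s • e₁ t + r • e₂ t := by abel
      refine ⟨t, ?_, ?_⟩
      · rw [hx]
        simp [dot4_add_right, dot4_smul_right,
          dot4_comm (e₄ t) (e₁ t), dot4_comm (e₄ t) (e₂ t), h14, h24]
      · rw [hx, he₄' t]
        simp [dot4_add_right, dot4_smul_right, dot4_smul_left,
          dot4_neg_left, dot4_neg_right, neg_smul,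
          dot4_comm (e₃ t) (e₁ t), dot4_comm (e₃ t) (e₂ t),
          dot4_comm (e₄ t) (e₁ t), h13, h23, h14]
    · rintro ⟨t, h0, h1⟩
      obtain ⟨h11, h22, h33, h44, h12, h13, h14, h23, h24, h34⟩ := horth t
      rw [he₄' t] at h1
      set u := x - γ t with hu
      have hdec := frame_decomp (e₁ t) (e₂ t) (e₃ t) (e₄ t)
        h11 h22 h33 h44 h12 h13 h14 h23 h24 h34 u
      have ha3 : dot4 (e₃ t) u = 0 := by
        simp only [dot4_smul_left, dot4_neg_left, dot4_smul_right, neg_smul,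
          dot4_comm (e₄ t) (e₁ t), h14] at h1
        have h6 : κ₆ t * dot4 (e₃ t) u = 0 := by linear_combination -h1
        rcases mul_eq_zero.mp h6 with h | h
        · exact absurd h (hk t)
        · exact h
      refine ⟨t, dot4 (e₁ t) u, dot4 (e₂ t) u, ?_⟩
      have hx : γ t + u = x := by rw [hu]; abel
      have hu2 : u = dot4 (e₁ t) u • e₁ t + dot4 (e₂ t) u • e₂ t := by
        conv_lhs => rw [hdec]
        rw [h0, ha3, zero_smul, zero_smul, add_zero, add_zero]
      rw [← hx]
      conv_rhs => rw [hu2]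
      abel
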